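/- Let N = 7 and w = CN1 = (-1, -1, 1), and let σ be the permutation of {1,...,7} with permutation ID P(1357246), i.e., σ(1)=1, σ(2)=3, σ(3)=5, σ(4)=7, σ(5)=2, σ(6)=4, σ(7)=6 (identified with a permutation of ZMod 7 via i ↦ i-1). Then the PBNN map f_{σ,w} has a globally stable binary periodic orbit of period 42; in particular the orbit has 42 points and there are 126 - 42 eventually periodic points outside it (excluding x_- and x_+). -/
import Mathlib
set_option maxRecDepth 4000


/-- Sign function: `sg u = 1` if `u ≥ 0`, else `-1`. -/
def sg (u : ℤ) : ℤ := if 0 ≤ u then 1 else -1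

/-- Hidden-layer map of the PBNN with weights `w = (w_a, w_b, w_c)`:
`h_w(x)_i = sg (w_a * x_{i-1} + w_b * x_i + w_c * x_{i+1})`. -/
def hmap (N : ℕ) (w : ℤ × ℤ × ℤ) (x : ZMod N → ℤ) : ZMod N → ℤ :=
  fun i => sg (w.1 * x (i - 1) + w.2.1 * x i + w.2.2 * x (i + 1))

/-- PBNN map `f_{σ,w}(x)_i = h_w(x)_{σ(i)}`. -/
def pbnn (N : ℕ) (w : ℤ × ℤ × ℤ) (σ : Equiv.Perm (ZMod N)) (x : ZMod N → ℤ) :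
    ZMod N → ℤ :=
  fun i => hmap N w x (σ i)

/-- `x` is a binary state vector, i.e. all entries lie in `B = {-1, 1}`. -/
def isB {N : ℕ} (x : ZMod N → ℤ) : Prop := ∀ i, x i = -1 ∨ x i = 1

/-- `z` has minimal period `p` under `f`. -/
def minPeriod {α : Type} (f : α → α) (z : α) (p : ℕ) : Prop :=
  0 < p ∧ f^[p] z = z ∧ ∀ q : ℕ, 0 < q → f^[q] z = z → p ≤ q

/-- The all-`(-1)` endpoint `x_-`. -/
def xminus (N : ℕ) : ZMod N → ℤ := fun _ => -1

/-- The all-`(+1)` endpoint `x_+`. -/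
def xplus (N : ℕ) : ZMod N → ℤ := fun _ => 1

/-- `f_{σ,w}` has a globally stable binary periodic orbit (GBPO) of period `p`:
there is a binary point `z` (other than the two endpoints) of minimal period `p`
such that every binary point other than the two endpoints eventually lands on
the orbit `{z, f z, ..., f^{p-1} z}`. -/
def hasGBPO (N : ℕ) (w : ℤ × ℤ × ℤ) (σ : Equiv.Perm (ZMod N)) (p : ℕ) : Prop :=
  ∃ z : ZMod N → ℤ, isB z ∧ z ≠ xminus N ∧ z ≠ xplus N ∧
    minPeriod (pbnn N w σ) z p ∧
    ∀ x : ZMod N → ℤ, isB x → x ≠ xminus N → x ≠ xplus N →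
      ∃ k : ℕ, ∃ j < p, (pbnn N w σ)^[k] x = (pbnn N w σ)^[j] z

/-- The cyclic shift `c : i ↦ i + 1` on `ZMod N`. -/
def cShift (N : ℕ) : Equiv.Perm (ZMod N) := Equiv.addRight 1

/-- Equivalence of permutation IDs under the conjugation action of the cyclic
group generated by `c`: `σ ~ τ` iff `τ = c^k ∘ σ ∘ c^{-k}` for some `k : ℤ`. -/
def shiftSetoid (N : ℕ) : Setoid (Equiv.Perm (ZMod N)) where
  r σ τ := ∃ k : ℤ, cShift N ^ k * σ * (cShift N ^ k)⁻¹ = τ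
  iseqv := by
    refine ⟨fun σ => ⟨0, by simp⟩, ?_, ?_⟩
    · rintro σ τ ⟨k, rfl⟩; exact ⟨-k, by group⟩
    · rintro σ τ ρ ⟨k, rfl⟩ ⟨l, rfl⟩; exact ⟨l + k, by group⟩

def perm1357246Fun : ZMod 7 → ZMod 7 := fun i =>
  if i = 0 then 0 else if i = 1 then 2 else if i = 2 then 4 else if i = 3 then 6 else if i = 4 then 1 else if i = 5 then 3 else 5

noncomputable def perm1357246 : Equiv.Perm (ZMod 7) :=
  Equiv.ofBijective perm1357246Fun (by decide)

def emb7 (n : ℕ) : ZMod 7 → ℤ := fun i => if n.testBit i.val then 1 else -1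

def nbit7 (n : ℕ) (i : ZMod 7) : Bool :=
  decide (0 ≤ (-1 : ℤ) * emb7 n (perm1357246Fun i - 1) + (-1) * emb7 n (perm1357246Fun i)
      + 1 * emb7 n (perm1357246Fun i + 1))

def stepN (n : ℕ) : ℕ :=
  (if nbit7 n 0 then 1 else 0) + (if nbit7 n 1 then 2 else 0) + (if nbit7 n 2 then 4 else 0) +
  (if nbit7 n 3 then 8 else 0) + (if nbit7 n 4 then 16 else 0) + (if nbit7 n 5 then 32 else 0) +
  (if nbit7 n 6 then 64 else 0)

lemma step_lt : ∀ n < 128, stepN n < 128 := by decide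

lemma bridge : ∀ n < 128, pbnn 7 (-1, -1, 1) perm1357246 (emb7 n) = emb7 (stepN n) := by decide
set_option maxHeartbeats 4000000

lemma orb_period : stepN^[42] 7 = 7 := by decide
lemma orb_min : ∀ q < 42, 0 < q → emb7 (stepN^[q] 7) ≠ emb7 7 := by decide
lemma glob : ∀ n < 128, n ≠ 0 → n ≠ 127 → ∃ j < 42, stepN^[2] n = stepN^[j] 7 := by decide
lemma inj7 : ∀ m < 128, ∀ n < 128, emb7 m = emb7 n → m = n := by decide
lemma orb_card : ((Finset.range 42).image (fun j => stepN^[j] 7)).card = 42 := by decide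

def bad (n : ℕ) : Prop := n ≠ 0 ∧ n ≠ 127 ∧ ¬ ∃ j < 42, stepN^[j] 7 = n
instance : DecidablePred bad := fun n => by unfold bad; infer_instance

lemma off_card : ((Finset.range 128).filter bad).card = 84 := by decide
lemma xm_eq : xminus 7 = emb7 0 := by decide
lemma xp_eq : xplus 7 = emb7 127 := by decide

def encB (b : ZMod 7 → Bool) : ℕ :=
  (if b 0 then 1 else 0) + (if b 1 then 2 else 0) + (if b 2 then 4 else 0) +
  (if b 3 then 8 else 0) + (if b 4 then 16 else 0) + (if b 5 then 32 else 0) +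
  (if b 6 then 64 else 0)

lemma encB_lt : ∀ b : ZMod 7 → Bool, encB b < 128 := by decide
lemma emb_encB : ∀ b : ZMod 7 → Bool, emb7 (encB b) = fun i => if b i then (1:ℤ) else -1 := by
  decide

lemma isB_emb7 (n : ℕ) : isB (emb7 n) := by
  intro i; unfold emb7; split <;> simp

lemma exists_emb {x : ZMod 7 → ℤ} (hx : isB x) : ∃ n < 128, x = emb7 n := by
  refine ⟨encB (fun i => decide (x i = 1)), encB_lt _, ?_⟩
  rw [emb_encB]
  funext i
  rcases hx i with h | h <;> simp [h]

-- iterate lemmas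
lemma iter_lt : ∀ (k n : ℕ), n < 128 → stepN^[k] n < 128 := by
  intro k
  induction k with
  | zero => intro n h; simpa using h
  | succ k ih =>
    intro n h
    rw [Function.iterate_succ_apply]
    exact ih _ (step_lt n h)

lemma iter_bridge : ∀ (k n : ℕ), n < 128 →
    (pbnn 7 (-1, -1, 1) perm1357246)^[k] (emb7 n) = emb7 (stepN^[k] n) := by
  intro k
  induction k with
  | zero => intro n _; simp
  | succ k ih =>
    intro n h
    rw [Function.iterate_succ_apply, Function.iterate_succ_apply, bridge n h]
    exact ih _ (step_lt n h)

lemma z_ne_xm : emb7 7 ≠ xminus 7 := by decide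
lemma z_ne_xp : emb7 7 ≠ xplus 7 := by decide

/-- For `N = 7`, CN1 = (-1,-1,1) and permutation ID `P(1357246)`, the PBNN map
has a globally stable binary periodic orbit of period `42`; the orbit has `42`
points and there are `126 - 42` eventually periodic points outside it
(excluding `x_-` and `x_+`). -/
theorem stmt9 :
    ∃ z : ZMod 7 → ℤ, isB z ∧ z ≠ xminus 7 ∧ z ≠ xplus 7 ∧
      minPeriod (pbnn 7 (-1, -1, 1) perm1357246) z 42 ∧
      (∀ x : ZMod 7 → ℤ, isB x → x ≠ xminus 7 → x ≠ xplus 7 →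
        ∃ k : ℕ, ∃ j < 42,
          (pbnn 7 (-1, -1, 1) perm1357246)^[k] x =
            (pbnn 7 (-1, -1, 1) perm1357246)^[j] z) ∧
      Set.ncard {y : ZMod 7 → ℤ |
        ∃ j < 42, y = (pbnn 7 (-1, -1, 1) perm1357246)^[j] z} = 42 ∧
      Set.ncard {x : ZMod 7 → ℤ | isB x ∧ x ≠ xminus 7 ∧ x ≠ xplus 7 ∧
        ¬ ∃ j < 42, x = (pbnn 7 (-1, -1, 1) perm1357246)^[j] z} = 126 - 42 := by
  have h7 : (7:ℕ) < 128 := by norm_num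
  refine ⟨emb7 7, isB_emb7 7, z_ne_xm, z_ne_xp, ⟨by norm_num, ?_, ?_⟩, ?_, ?_, ?_⟩
  · rw [iter_bridge 42 7 h7, orb_period]
  · intro q hq hfix
    by_contra hlt
    push_neg at hlt
    rw [iter_bridge q 7 h7] at hfix
    exact orb_min q hlt hq hfix
  · -- global attractivity
    intro x hx hxm hxp
    obtain ⟨n, hn, rfl⟩ := exists_emb hx
    have h0 : n ≠ 0 := by rintro rfl; exact hxm (xm_eq.symm)
    have h127 : n ≠ 127 := by rintro rfl; exact hxp (xp_eq.symm)
    obtain ⟨j, hj, hje⟩ := glob n hn h0 h127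
    exact ⟨2, j, hj, by rw [iter_bridge 2 n hn, iter_bridge j 7 h7, hje]⟩
  · -- orbit cardinality
    have hset : {y : ZMod 7 → ℤ |
        ∃ j < 42, y = (pbnn 7 (-1, -1, 1) perm1357246)^[j] (emb7 7)} =
        ↑(((Finset.range 42).image (fun j => stepN^[j] 7)).image emb7) := by
      ext y
      simp only [Set.mem_setOf_eq, Finset.coe_image, Set.mem_image, Finset.mem_coe,
        Finset.mem_image, Finset.mem_range]
      constructor
      · rintro ⟨j, hj, rfl⟩
        exact ⟨stepN^[j] 7, ⟨j, hj, rfl⟩, (iter_bridge j 7 h7).symm⟩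
      · rintro ⟨m, ⟨j, hj, rfl⟩, rfl⟩
        exact ⟨j, hj, (iter_bridge j 7 h7).symm⟩
    rw [hset, Set.ncard_coe_finset, Finset.card_image_of_injOn, orb_card]
    intro m hm n hn' hmn
    simp only [Finset.coe_image, Set.mem_image, Finset.mem_coe, Finset.mem_range] at hm hn'
    obtain ⟨j, hj, rfl⟩ := hm
    obtain ⟨j', hj', rfl⟩ := hn'
    exact inj7 _ (iter_lt j 7 h7) _ (iter_lt j' 7 h7) hmn
  · -- off-orbit cardinality
    have hset : {x : ZMod 7 → ℤ | isB x ∧ x ≠ xminus 7 ∧ x ≠ xplus 7 ∧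
        ¬ ∃ j < 42, x = (pbnn 7 (-1, -1, 1) perm1357246)^[j] (emb7 7)} =
        ↑(((Finset.range 128).filter bad).image emb7) := by
      ext x
      simp only [Set.mem_setOf_eq, Finset.coe_image, Set.mem_image, Finset.mem_coe,
        Finset.mem_filter, Finset.mem_range]
      constructor
      · rintro ⟨hx, hxm, hxp, hnorb⟩
        obtain ⟨n, hn, rfl⟩ := exists_emb hx
        have h0 : n ≠ 0 := by rintro rfl; exact hxm (xm_eq.symm)
        have h127 : n ≠ 127 := by rintro rfl; exact hxp (xp_eq.symm)
        refine ⟨n, ⟨hn, h0, h127, ?_⟩, rfl⟩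
        rintro ⟨j, hj, hje⟩
        exact hnorb ⟨j, hj, by rw [iter_bridge j 7 h7, hje]⟩
      · rintro ⟨n, ⟨hn, h0, h127, hnorb⟩, rfl⟩
        refine ⟨isB_emb7 n, ?_, ?_, ?_⟩
        · rw [xm_eq]; intro h; exact h0 (inj7 n hn 0 (by norm_num) h)
        · rw [xp_eq]; intro h; exact h127 (inj7 n hn 127 (by norm_num) h)
        · rintro ⟨j, hj, hje⟩
          rw [iter_bridge j 7 h7] at hje
          exact hnorb ⟨j, hj, inj7 _ (iter_lt j 7 h7) n hn hje.symm⟩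
    rw [hset, Set.ncard_coe_finset, Finset.card_image_of_injOn]
    · rw [off_card]
    · intro m hm n hn' hmn
      simp only [Finset.coe_filter, Set.mem_setOf_eq, Finset.mem_range] at hm hn'
      exact inj7 m hm.1 n hn'.1 hmn
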